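/- Let λ > 0 and let (y,τ) satisfy −1 < y < 0, y ≠ −1/2 and τ²(1+y) > 1−y. Then the partial derivatives of the map (y,τ) ↦ e₁(y,τ) = λ(2y+1)(1 + iτ(1 + 1/y))(1 − iτ)/(2(1 + iτ)), namely ∂e₁/∂y = λ[2 − iτ(1/y² − 2)](1 − iτ)/(2(1 + iτ)) and ∂e₁/∂τ = λ(2y+1){2τ(1 + 1/y) − i[(1 − 1/y) − τ²(1 + 1/y)]}/(2(1 + iτ)²), are both nonzero and are linearly independent over ℝ as vectors in ℂ ≅ ℝ². In particular, viewed as a map from ℝ² to ℝ², e₁ has invertible derivative at every such point and is locally injective there. -/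

import Mathlib

/-!
Both partial derivatives of `e₁` carry the common factor `λ / (2 y² (1 + iτ)²)`. Removing it leaves
`(1 + τ²)(2y² - iτ(1 - 2y²))` and `(2y + 1) y (2τ(y + 1) - i(y - 1 - τ²(y + 1)))`, whose real
determinant is `2 (1 + τ²)(2y + 1) y (1 - y)(y² + τ²(1 + y)²)`; it vanishes for no `y < 0` with
`y ≠ -1/2`. So the real Jacobian of `e₁` is invertible there, and the inverse function theorem
gives local injectivity.
-/

open Complex

/-- The trajectory map `e₁(y,τ)` of the paper, for a fixed real parameter `lam`. -/
noncomputable def e1Traj (lam y τ : ℝ) : ℂ :=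
  (lam : ℂ) * (2 * (y : ℂ) + 1) * (1 + Complex.I * (τ : ℂ) * (1 + 1 / (y : ℂ))) *
    (1 - Complex.I * (τ : ℂ)) / (2 * (1 + Complex.I * (τ : ℂ)))

open Module Set Topology Function

theorem Complex.linearIndependent_pair_iff {z w : ℂ} :
    LinearIndependent ℝ ![z, w] ↔ z.re * w.im ≠ z.im * w.re := by
  have h := LinearIndependent.pair_add_smul_add_smul_iff (R := ℝ) (x := (1 : ℂ)) (y := I)
    z.re z.im w.re w.im
  simp only [real_smul, mul_one, re_add_im] at h
  rw [h, and_iff_right (by simpa [coe_basisOneI] using basisOneI.linearIndependent)]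

theorem Complex.linearIndependent_pair_mul_left_iff {c z w : ℂ} (hc : c ≠ 0) :
    LinearIndependent ℝ ![c * z, c * w] ↔ LinearIndependent ℝ ![z, w] := by
  have hdet : (c * z).re * (c * w).im - (c * z).im * (c * w).re =
      normSq c * (z.re * w.im - z.im * w.re) := by
    simp only [mul_re, mul_im, normSq_apply]
    ring
  simp only [linearIndependent_pair_iff, ← sub_ne_zero (a := (c * z).re * _), hdet,
    ← sub_ne_zero (a := z.re * _), ne_eq, mul_eq_zero, normSq_eq_zero, hc, false_or]

theorem Complex.one_add_I_mul_ofReal_ne_zero (t : ℝ) : 1 + I * t ≠ 0 := by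
  intro h
  simpa using congrArg re h

theorem HasFDerivAt.apply_eq_of_partials {𝕜 F : Type*} [NontriviallyNormedField 𝕜]
    [NormedAddCommGroup F] [NormedSpace 𝕜 F] {f : 𝕜 × 𝕜 → F} {f' : 𝕜 × 𝕜 →L[𝕜] F}
    {p : 𝕜 × 𝕜} {d₁ d₂ : F} (hf : HasFDerivAt f f' p)
    (h₁ : HasDerivAt (fun x => f (x, p.2)) d₁ p.1)
    (h₂ : HasDerivAt (fun t => f (p.1, t)) d₂ p.2) (v : 𝕜 × 𝕜) :
    f' v = v.1 • d₁ + v.2 • d₂ := by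
  have e₁ : f' (1, 0) = d₁ :=
    (hf.comp_hasDerivAt p.1 ((hasDerivAt_id _).prodMk (hasDerivAt_const _ _))).unique h₁
  have e₂ : f' (0, 1) = d₂ :=
    (hf.comp_hasDerivAt p.2 ((hasDerivAt_const _ _).prodMk (hasDerivAt_id _))).unique h₂
  have hv : v = v.1 • ((1 : 𝕜), (0 : 𝕜)) + v.2 • ((0 : 𝕜), (1 : 𝕜)) := by ext <;> simp
  rw [hv, map_add, map_smul, map_smul, e₁, e₂]
  simp

theorem HasStrictFDerivAt.exists_mem_nhds_injOn {𝕜 E F : Type*} [NontriviallyNormedField 𝕜]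
    [CompleteSpace 𝕜] [NormedAddCommGroup E] [NormedSpace 𝕜 E] [FiniteDimensional 𝕜 E]
    [NormedAddCommGroup F] [NormedSpace 𝕜 F] [FiniteDimensional 𝕜 F]
    {f : E → F} {f' : E →L[𝕜] F} {p : E} (hf : HasStrictFDerivAt f f' p)
    (hinj : Injective f') (hdim : finrank 𝕜 E = finrank 𝕜 F) :
    ∃ U ∈ 𝓝 p, InjOn f U := by
  have := FiniteDimensional.complete 𝕜 E
  let e : E ≃L[𝕜] F :=
    (LinearMap.linearEquivOfInjective (f' : E →ₗ[𝕜] F) hinj hdim).toContinuousLinearEquiv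
  have he : HasStrictFDerivAt f (e : E →L[𝕜] F) p := hf
  exact ⟨_, (he.toOpenPartialHomeomorph f).open_source.mem_nhds
    he.mem_toOpenPartialHomeomorph_source, (he.toOpenPartialHomeomorph f).injOn⟩

theorem exists_mem_nhds_injOn_of_partials {𝕜 F : Type*} [RCLike 𝕜] [NormedAddCommGroup F]
    [NormedSpace 𝕜 F] [FiniteDimensional 𝕜 F] (hF : finrank 𝕜 F = 2)
    {f : 𝕜 × 𝕜 → F} {p : 𝕜 × 𝕜} {d₁ d₂ : F} (hf : ContDiffAt 𝕜 1 f p)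
    (h₁ : HasDerivAt (fun x => f (x, p.2)) d₁ p.1)
    (h₂ : HasDerivAt (fun t => f (p.1, t)) d₂ p.2) (hd : LinearIndependent 𝕜 ![d₁, d₂]) :
    ∃ U ∈ 𝓝 p, InjOn f U := by
  have hstrict := hf.hasStrictFDerivAt one_ne_zero
  refine hstrict.exists_mem_nhds_injOn ?_ (by simp [hF])
  refine (injective_iff_map_eq_zero _).2 fun v hv => ?_
  rw [hstrict.hasFDerivAt.apply_eq_of_partials h₁ h₂] at hv
  obtain ⟨hv₁, hv₂⟩ := LinearIndependent.pair_iff.1 hd _ _ hv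
  exact Prod.ext hv₁ hv₂

noncomputable def e1TrajDerivY (lam y τ : ℝ) : ℂ :=
  (lam : ℂ) * (2 - I * (τ : ℂ) * (1 / (y : ℂ) ^ 2 - 2)) * (1 - I * (τ : ℂ)) /
    (2 * (1 + I * (τ : ℂ)))

noncomputable def e1TrajDerivTau (lam y τ : ℝ) : ℂ :=
  (lam : ℂ) * (2 * (y : ℂ) + 1) *
    (2 * (τ : ℂ) * (1 + 1 / (y : ℂ)) -
      I * ((1 - 1 / (y : ℂ)) - (τ : ℂ) ^ 2 * (1 + 1 / (y : ℂ)))) /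
    (2 * (1 + I * (τ : ℂ)) ^ 2)

section e1Traj

variable {lam y τ : ℝ}

theorem contDiffAt_e1Traj (hy : y ≠ 0) :
    ContDiffAt ℝ 1 (fun p : ℝ × ℝ => e1Traj lam p.1 p.2) (y, τ) := by
  have := one_add_I_mul_ofReal_ne_zero τ
  have : ContDiff ℝ 1 (fun x : ℝ => (x : ℂ)) := ofRealCLM.contDiff
  simp only [e1Traj, div_eq_mul_inv]
  fun_prop (disch := simp_all)

theorem hasDerivAt_e1Traj_y (hy : y ≠ 0) :
    HasDerivAt (fun y' : ℝ => e1Traj lam y' τ) (e1TrajDerivY lam y τ) y := by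
  have hyC : (y : ℂ) ≠ 0 := ofReal_ne_zero.2 hy
  have h := ((((hasDerivAt_id (y : ℂ)).const_mul 2).add_const 1).const_mul (lam : ℂ)).mul
    (((hasDerivAt_inv hyC).const_add 1).const_mul (I * τ) |>.const_add 1)
    |>.mul_const (1 - I * τ) |>.div_const (2 * (1 + I * τ))
  convert h.comp_ofReal using 1
  · ext y'
    simp [e1Traj, one_div]
  · have := one_add_I_mul_ofReal_ne_zero τ
    simp only [e1TrajDerivY, id]
    field_simp
    ring

theorem hasDerivAt_e1Traj_tau :
    HasDerivAt (fun τ' : ℝ => e1Traj lam y τ') (e1TrajDerivTau lam y τ) τ := by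
  have hτ := one_add_I_mul_ofReal_ne_zero τ
  have hI := (hasDerivAt_id (τ : ℂ)).const_mul I
  have h := ((hI.mul_const (1 + 1 / (y : ℂ))).const_add 1 |>.const_mul ((lam : ℂ) * (2 * y + 1))
    |>.mul (hI.const_sub 1)).div ((hI.const_add 1).const_mul 2) (mul_ne_zero two_ne_zero hτ)
  convert h.comp_ofReal using 1
  · ext τ'
    simp [e1Traj, mul_assoc]
  · simp only [e1TrajDerivTau, id, Pi.mul_apply]
    rw [div_eq_div_iff (by simpa using hτ) (by simpa using hτ)]
    grind [I_sq]

theorem e1TrajDerivY_eq_mul (hy : y ≠ 0) :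
    e1TrajDerivY lam y τ = lam / (2 * y ^ 2 * (1 + I * τ) ^ 2) *
      ((1 + τ ^ 2) * (2 * y ^ 2 - I * τ * (1 - 2 * y ^ 2))) := by
  have := one_add_I_mul_ofReal_ne_zero τ
  have hyC : (y : ℂ) ≠ 0 := ofReal_ne_zero.2 hy
  simp only [e1TrajDerivY]
  field_simp
  grind [I_sq]

theorem e1TrajDerivTau_eq_mul (hy : y ≠ 0) :
    e1TrajDerivTau lam y τ = lam / (2 * y ^ 2 * (1 + I * τ) ^ 2) *
      ((2 * y + 1) * y * (2 * τ * (y + 1) - I * (y - 1 - τ ^ 2 * (y + 1)))) := by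
  have := one_add_I_mul_ofReal_ne_zero τ
  have hyC : (y : ℂ) ≠ 0 := ofReal_ne_zero.2 hy
  simp only [e1TrajDerivTau]
  field_simp

theorem linearIndependent_e1TrajDeriv (hlam : lam ≠ 0) (hy₀ : y ≠ 0) (hy₁ : y ≠ 1)
    (hy : y ≠ -1 / 2) :
    LinearIndependent ℝ ![e1TrajDerivY lam y τ, e1TrajDerivTau lam y τ] := by
  have hc : (lam : ℂ) / (2 * y ^ 2 * (1 + I * τ) ^ 2) ≠ 0 := by
    have := one_add_I_mul_ofReal_ne_zero τ
    have hyC : (y : ℂ) ≠ 0 := ofReal_ne_zero.2 hy₀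
    simp_all
  rw [e1TrajDerivY_eq_mul hy₀, e1TrajDerivTau_eq_mul hy₀,
    linearIndependent_pair_mul_left_iff hc, linearIndependent_pair_iff, ← sub_ne_zero]
  have hdet : 2 * (1 + τ ^ 2) * (2 * y + 1) * y * (1 - y) * (y ^ 2 + τ ^ 2 * (1 + y) ^ 2) ≠ 0 := by
    have : 2 * y + 1 ≠ 0 := fun h => hy (by linarith)
    have : 1 - y ≠ 0 := sub_ne_zero.2 hy₁.symm
    have : 0 < y ^ 2 + τ ^ 2 * (1 + y) ^ 2 := by positivity
    positivity
  convert hdet using 1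
  simp only [sq, mul_re, mul_im, add_re, add_im, sub_re, sub_im, one_re, one_im, ofReal_re,
    ofReal_im, re_ofNat, im_ofNat, I_re, I_im]
  ring

end e1Traj

theorem point_A_local_injectivity_general (lam y τ : ℝ) (hlam : 0 < lam)
    (hy0 : y < 0) (hy : y ≠ -1/2)
    (d₁ d₂ : ℂ)
    (hd₁ : d₁ = (lam : ℂ) * (2 - Complex.I * (τ : ℂ) * (1 / (y : ℂ) ^ 2 - 2)) *
      (1 - Complex.I * (τ : ℂ)) / (2 * (1 + Complex.I * (τ : ℂ))))
    (hd₂ : d₂ = (lam : ℂ) * (2 * (y : ℂ) + 1) *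
      (2 * (τ : ℂ) * (1 + 1 / (y : ℂ)) -
        Complex.I * ((1 - 1 / (y : ℂ)) - (τ : ℂ) ^ 2 * (1 + 1 / (y : ℂ)))) /
      (2 * (1 + Complex.I * (τ : ℂ)) ^ 2)) :
    HasDerivAt (fun y' : ℝ => e1Traj lam y' τ) d₁ y ∧
    HasDerivAt (fun τ' : ℝ => e1Traj lam y τ') d₂ τ ∧
    d₁ ≠ 0 ∧ d₂ ≠ 0 ∧ LinearIndependent ℝ ![d₁, d₂] ∧
    ∃ U ∈ nhds (y, τ), Set.InjOn (fun p : ℝ × ℝ => e1Traj lam p.1 p.2) U := by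
  subst hd₁ hd₂
  have hy₀ : y ≠ 0 := hy0.ne
  have hli := linearIndependent_e1TrajDeriv (τ := τ) hlam.ne' hy₀ (hy0.trans one_pos).ne hy
  refine ⟨hasDerivAt_e1Traj_y hy₀, hasDerivAt_e1Traj_tau, hli.ne_zero 0, hli.ne_zero 1, hli, ?_⟩
  exact exists_mem_nhds_injOn_of_partials finrank_real_complex (contDiffAt_e1Traj hy₀)
    (hasDerivAt_e1Traj_y hy₀) hasDerivAt_e1Traj_tau hli

theorem point_A_local_injectivity (lam y τ : ℝ) (hlam : 0 < lam)
    (hy1 : -1 < y) (hy0 : y < 0) (hy : y ≠ -1/2) (hτ : τ ^ 2 * (1 + y) > 1 - y)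
    (d₁ d₂ : ℂ)
    (hd₁ : d₁ = (lam : ℂ) * (2 - Complex.I * (τ : ℂ) * (1 / (y : ℂ) ^ 2 - 2)) *
      (1 - Complex.I * (τ : ℂ)) / (2 * (1 + Complex.I * (τ : ℂ))))
    (hd₂ : d₂ = (lam : ℂ) * (2 * (y : ℂ) + 1) *
      (2 * (τ : ℂ) * (1 + 1 / (y : ℂ)) -
        Complex.I * ((1 - 1 / (y : ℂ)) - (τ : ℂ) ^ 2 * (1 + 1 / (y : ℂ)))) /
      (2 * (1 + Complex.I * (τ : ℂ)) ^ 2)) :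
    HasDerivAt (fun y' : ℝ => e1Traj lam y' τ) d₁ y ∧
    HasDerivAt (fun τ' : ℝ => e1Traj lam y τ') d₂ τ ∧
    d₁ ≠ 0 ∧ d₂ ≠ 0 ∧ LinearIndependent ℝ ![d₁, d₂] ∧
    ∃ U ∈ nhds (y, τ), Set.InjOn (fun p : ℝ × ℝ => e1Traj lam p.1 p.2) U :=
  point_A_local_injectivity_general lam y τ hlam hy0 hy d₁ d₂ hd₁ hd₂
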